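/- arXiv:1911.13201 — 11 statements merged into one kernel-verified Lean document; each statement's English description precedes it below -/
import Mathlib

section
/- A poset P is an ω-dcpo (every countable directed subset has a supremum) if and only if every countable chain in P has a supremum. -/
/-- A poset is an ω-dcpo (every countable directed subset has a supremum) iff every
countable (nonempty) chain has a supremum. -/
theorem omegaDcpo_iff_countable_chain_sup {P : Type*} [PartialOrder P] :
    (∀ D : Set P, D.Countable → D.Nonempty → DirectedOn (· ≤ ·) D → ∃ s, IsLUB D s) ↔
    (∀ C : Set P, C.Countable → C.Nonempty → IsChain (· ≤ ·) C → ∃ s, IsLUB C s) := by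
  constructor
  · intro h C hc hne hch
    exact h C hc hne hch.directedOn
  · intro h D hc hne hdir
    obtain ⟨f, hf⟩ := Set.Countable.exists_eq_range hc hne
    have hfD : ∀ n, f n ∈ D := fun n => hf ▸ Set.mem_range_self n
    -- build an increasing sequence g with f n ≤ g n, g n ∈ D
    have step : ∀ (x : P) (n : ℕ), x ∈ D → ∃ z ∈ D, x ≤ z ∧ f n ≤ z := by
      intro x n hx
      obtain ⟨z, hz, h1, h2⟩ := hdir x hx (f n) (hfD n)
      exact ⟨z, hz, h1, h2⟩
    choose next hnextD hnext1 hnext2 using step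
    let g' : ℕ → {x : P // x ∈ D} := fun n =>
      Nat.rec ⟨f 0, hfD 0⟩ (fun k gk => ⟨next gk.1 (k+1) gk.2, hnextD _ _ _⟩) n
    let g : ℕ → P := fun n => (g' n).1
    have hgD : ∀ n, g n ∈ D := fun n => (g' n).2
    have hstep : ∀ n, g n ≤ g (n+1) := fun n => hnext1 _ _ (g' n).2
    have hmono : Monotone g := monotone_nat_of_le_succ hstep
    have hfg : ∀ n, f n ≤ g n := by
      intro n
      cases n with
      | zero => exact le_refl _
      | succ k => exact hnext2 _ _ (g' k).2
    obtain ⟨s, hs⟩ := h (Set.range g) (Set.countable_range g) ⟨g 0, Set.mem_range_self 0⟩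
      (hmono.isChain_range)
    refine ⟨s, ?_, ?_⟩
    · rintro x hx
      rw [hf] at hx
      obtain ⟨n, rfl⟩ := hx
      exact le_trans (hfg n) (hs.1 (Set.mem_range_self n))
    · intro b hb
      apply hs.2
      rintro _ ⟨n, rfl⟩
      exact hb (hgD n)
end

section
/- Let X = ∏_{i∈I} X_i be a product of T0 spaces and A an irreducible subset of X. Then the closure of A in X equals the product ∏_{i∈I} cl_{X_i}(p_i(A)) of the closures of its projections. -/
/-!
A basic open neighbourhood of a point of `∏ i, closure (p i '' A)` is cut out by finitely many
open conditions on coordinates, each of which is met by `A`; irreducibility of `A` makes them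
met simultaneously.
-/

open Set

theorem IsIrreducible.inter_biInter_nonempty {X ι : Type*} [TopologicalSpace X] {s : Set X}
    (hs : IsIrreducible s) {I : Finset ι} {U : ι → Set X} (hU : ∀ i ∈ I, IsOpen (U i))
    (hsU : ∀ i ∈ I, (s ∩ U i).Nonempty) : (s ∩ ⋂ i ∈ I, U i).Nonempty := by
  classical
  simpa [sInter_image] using
    isIrreducible_iff_sInter.mp hs (I.image U) (by simpa using hU) (by simpa using hsU)

theorem closure_irreducible_prod_general {ι : Type*} {X : ι → Type*} [∀ i, TopologicalSpace (X i)]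
    (A : Set (∀ i, X i)) (hA : IsIrreducible A) :
    closure A = Set.univ.pi fun i => closure ((fun f => f i) '' A) := by
  refine ((closure_mono (subset_pi_eval_image univ A)).trans_eq (closure_pi_set _ _)).antisymm
    fun x hx => mem_closure_iff.mpr fun s hs hxs => ?_
  obtain ⟨I, u, hu, hIu⟩ := isOpen_pi_iff.mp hs x hxs
  have hAu : ∀ i ∈ I, (A ∩ (fun f => f i) ⁻¹' u i).Nonempty := fun i hi => by
    obtain ⟨_, hy, a, ha, rfl⟩ := mem_closure_iff.mp (hx i trivial) (u i) (hu i hi).1 (hu i hi).2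
    exact ⟨a, ha, hy⟩
  obtain ⟨a, ha, hau⟩ :=
    hA.inter_biInter_nonempty (fun i hi => (hu i hi).1.preimage (continuous_apply i)) hAu
  exact ⟨a, hIu (by simpa [pi_def] using hau), ha⟩

/-- In a product of T0 spaces, the closure of an irreducible set `A` is the product of the
closures of its projections. -/
theorem closure_irreducible_prod {ι : Type*} {X : ι → Type*} [∀ i, TopologicalSpace (X i)]
    [∀ i, T0Space (X i)] (A : Set (∀ i, X i)) (hA : IsIrreducible A) :
    closure A = Set.univ.pi fun i => closure ((fun f => f i) '' A) :=
  closure_irreducible_prod_general A hA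
end

section
/- Let X be a T0 space and 𝒜 a family of compact saturated subsets of X. Then ⋂𝒜 = ⋂cl(𝒜), where the closure of 𝒜 is taken in the Smyth power space P_S(X). -/
/-- The specialization order: `x ≤ y` iff `x ∈ cl {y}`. -/
def specLE {X : Type*} [TopologicalSpace X] (x y : X) : Prop := x ∈ closure ({y} : Set X)

/-- `↑x` in the specialization order. -/
def upClo {X : Type*} [TopologicalSpace X] (x : X) : Set X := {y | specLE x y}

/-- A set is saturated iff it is an upper set in the specialization order. -/
def IsSaturatedSet {X : Type*} [TopologicalSpace X] (K : Set X) : Prop :=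
  ∀ x y, x ∈ K → specLE x y → y ∈ K

/-- The underlying set of the Smyth power space: nonempty compact saturated subsets. -/
def KSet (X : Type*) [TopologicalSpace X] : Type _ :=
  {K : Set X // K.Nonempty ∧ IsCompact K ∧ IsSaturatedSet K}

/-- The upper Vietoris topology, generated by the sets `□U = {K : K ⊆ U}` for `U` open. -/
instance (X : Type*) [TopologicalSpace X] : TopologicalSpace (KSet X) :=
  TopologicalSpace.generateFrom
    {S : Set (KSet X) | ∃ U : Set X, IsOpen U ∧ S = {K : KSet X | K.1 ⊆ U}}

/-- For a family `𝒜` of nonempty compact saturated sets of a T0 space `X`,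
`⋂𝒜 = ⋂ cl(𝒜)`, the closure taken in the Smyth power space. -/
theorem iInter_eq_iInter_closure {X : Type*} [TopologicalSpace X] [T0Space X]
    (𝒜 : Set (KSet X)) :
    ⋂ K ∈ 𝒜, K.1 = ⋂ K ∈ closure 𝒜, K.1 := by
  apply subset_antisymm
  · intro x hx
    simp only [Set.mem_iInter] at hx ⊢
    intro K hK
    by_contra hxK
    have hU : K.1 ⊆ (closure ({x} : Set X))ᶜ := fun k hk hkx =>
      hxK (K.2.2.2 k x hk hkx)
    have hopen : IsOpen {A : KSet X | A.1 ⊆ (closure ({x} : Set X))ᶜ} :=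
      TopologicalSpace.GenerateOpen.basic _
        ⟨_, isClosed_closure.isOpen_compl, rfl⟩
    obtain ⟨A, hAU, hA𝒜⟩ := mem_closure_iff.mp hK _ hopen hU
    exact hAU (hx A hA𝒜) (subset_closure rfl)
  · exact Set.biInter_mono subset_closure (fun _ _ => subset_rfl)
end

section
/- For a T0 space X, if 𝒦 is a compact subset of the Smyth power space P_S(X), then ⋃𝒦 is a compact saturated subset of X; moreover the union map ⋃ : P_S(P_S(X)) → P_S(X) is continuous. -/
lemma isOpen_box {X : Type*} [TopologicalSpace X] {U : Set X} (hU : IsOpen U) :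
    IsOpen {K : KSet X | K.1 ⊆ U} :=
  TopologicalSpace.isOpen_generateFrom_of_mem ⟨U, hU, rfl⟩

/-- If `𝒦` is a compact subset of the Smyth power space of a T0 space `X`, then `⋃𝒦` is a
nonempty compact saturated subset of `X`; moreover the union map
`⋃ : P_S(P_S(X)) → P_S(X)` is continuous. -/
theorem union_compact_of_compact_in_Smyth {X : Type*} [TopologicalSpace X] [T0Space X] :
    (∀ 𝒦 : Set (KSet X), 𝒦.Nonempty → IsCompact 𝒦 →
      (⋃ K ∈ 𝒦, K.1).Nonempty ∧ IsCompact (⋃ K ∈ 𝒦, K.1) ∧ IsSaturatedSet (⋃ K ∈ 𝒦, K.1)) ∧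
    (∀ u : KSet (KSet X) → KSet X, (∀ 𝒢, (u 𝒢).1 = ⋃ K ∈ 𝒢.1, K.1) → Continuous u) := by
  constructor
  · intro 𝒦 hne hcomp
    refine ⟨?_, ?_, ?_⟩
    · obtain ⟨K, hK⟩ := hne
      obtain ⟨x, hx⟩ := K.2.1
      exact ⟨x, Set.mem_biUnion hK hx⟩
    · classical
      apply isCompact_of_finite_subcover
      intro ι U hUopen hcover
      have key : ∀ K : KSet X, K ∈ 𝒦 → ∃ t : Finset ι, K.1 ⊆ ⋃ i ∈ t, U i := fun K hK =>
        K.2.2.1.elim_finite_subcover U hUopen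
          ((Set.subset_biUnion_of_mem hK).trans hcover)
      have hKcov : 𝒦 ⊆ ⋃ t : Finset ι, {L : KSet X | L.1 ⊆ ⋃ i ∈ t, U i} := by
        intro K hK
        obtain ⟨t, ht⟩ := key K hK
        exact Set.mem_iUnion.2 ⟨t, ht⟩
      obtain ⟨T, hT⟩ := hcomp.elim_finite_subcover
        (fun t : Finset ι => {L : KSet X | L.1 ⊆ ⋃ i ∈ t, U i})
        (fun t => isOpen_box (isOpen_biUnion fun i _ => hUopen i)) hKcov
      refine ⟨T.sup id, ?_⟩
      intro x hx
      obtain ⟨K, hK, hxK⟩ := Set.mem_iUnion₂.1 hx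
      obtain ⟨t, htT, hKt⟩ := Set.mem_iUnion₂.1 (hT hK)
      obtain ⟨i, hit, hxi⟩ := Set.mem_iUnion₂.1 (hKt hxK)
      exact Set.mem_iUnion₂.2 ⟨i, Finset.le_sup (f := id) htT hit, hxi⟩
    · intro x y hx hxy
      obtain ⟨K, hK, hxK⟩ := Set.mem_iUnion₂.1 hx
      exact Set.mem_iUnion₂.2 ⟨K, hK, K.2.2.2 x y hxK hxy⟩
  · intro u hu
    refine continuous_generateFrom_iff.mpr ?_
    rintro S ⟨U, hU, rfl⟩
    have heq : u ⁻¹' {K : KSet X | K.1 ⊆ U}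
        = {𝒢 : KSet (KSet X) | 𝒢.1 ⊆ {K : KSet X | K.1 ⊆ U}} := by
      ext 𝒢
      simp only [Set.mem_preimage, Set.mem_setOf_eq, hu, Set.iUnion₂_subset_iff]
      exact ⟨fun h K hK => h K hK, fun h K hK => h hK⟩
    rw [heq]
    exact isOpen_box (isOpen_box hU)
end

section
/- A T0 space X is an ω-d-space if and only if for every countable directed subset D of X (in the specialization order) and every open set U, ⋂_{d∈D} ↑d ⊆ U implies d ∈ U for some d ∈ D. -/
/-- `X` is ω-well-filtered: for every countable filtered family of nonempty compact
saturated sets and every open `U`, `⋂ Kᵢ ⊆ U` implies some `Kᵢ ⊆ U`. -/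
def OmegaWellFiltered (X : Type*) [TopologicalSpace X] : Prop :=
  ∀ K : ℕ → Set X, (∀ n, (K n).Nonempty ∧ IsCompact (K n) ∧ IsSaturatedSet (K n)) →
    (∀ m n, ∃ k, K k ⊆ K m ∩ K n) →
    ∀ U : Set X, IsOpen U → (⋂ n, K n) ⊆ U → ∃ n, K n ⊆ U

/-- `X` is an ω-d-space: the closure of every countable directed subset
(in the specialization order) has a generic point. -/
def OmegaDSpace (X : Type*) [TopologicalSpace X] : Prop :=
  ∀ D : Set X, D.Countable → D.Nonempty → DirectedOn specLE D →
    ∃ x, closure D = closure ({x} : Set X)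

/-- A T0 space is an ω-d-space iff for every countable directed set `D` (in the
specialization order) and open `U`, `⋂_{d∈D} ↑d ⊆ U` implies `d ∈ U` for some `d ∈ D`. -/
theorem omegaDSpace_iff_inter_up_subset {X : Type*} [TopologicalSpace X] [T0Space X] :
    OmegaDSpace X ↔
    ∀ D : Set X, D.Countable → D.Nonempty → DirectedOn specLE D →
      ∀ U : Set X, IsOpen U → (⋂ d ∈ D, upClo d) ⊆ U → ∃ d ∈ D, d ∈ U := by
  constructor
  · intro h D hc hne hdir U hU hsub
    obtain ⟨x, hx⟩ := h D hc hne hdir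
    have hxU : x ∈ U := by
      apply hsub
      simp only [Set.mem_iInter]
      intro d hd
      have : d ∈ closure ({x} : Set X) := hx ▸ subset_closure hd
      exact this
    have hxD : x ∈ closure D := hx ▸ subset_closure rfl
    rw [mem_closure_iff] at hxD
    obtain ⟨d, hdU, hdD⟩ := hxD U hU hxU
    exact ⟨d, hdD, hdU⟩
  · intro h D hc hne hdir
    by_cases hA : (⋂ d ∈ D, upClo d) ⊆ (closure D)ᶜ
    · obtain ⟨d, hdD, hdC⟩ := h D hc hne hdir _ isClosed_closure.isOpen_compl hA
      exact absurd (subset_closure hdD) hdC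
    · rw [Set.not_subset] at hA
      obtain ⟨x, hxA, hxD⟩ := hA
      rw [Set.mem_compl_iff, not_not] at hxD
      refine ⟨x, le_antisymm ?_ ?_⟩
      · refine closure_minimal (fun d hd => ?_) isClosed_closure
        simp only [Set.mem_iInter] at hxA
        exact hxA d hd
      · exact closure_minimal (Set.singleton_subset_iff.2 hxD) isClosed_closure
end

section
/- For a poset P, the Alexandroff space (P, α(P)) is an ω-d-space if and only if every countable directed subset of P has a largest element (P is ω-Noetherian). -/
lemma alex_closure {P : Type*} [PartialOrder P] [TopologicalSpace P]
    (halex : ∀ U : Set P, IsOpen U ↔ IsUpperSet U) (S : Set P) :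
    closure S = {y | ∃ s ∈ S, y ≤ s} := by
  apply Set.Subset.antisymm
  · apply closure_minimal
    · intro s hs; exact ⟨s, hs, le_rfl⟩
    · rw [← isOpen_compl_iff, halex]
      intro a b hab ha hb
      obtain ⟨s, hs, hle⟩ := hb
      exact ha ⟨s, hs, hab.trans hle⟩
  · rintro y ⟨s, hs, hle⟩
    rw [mem_closure_iff]
    intro U hU hy
    exact ⟨s, (halex U).1 hU hle hy, hs⟩

lemma alex_specLE {P : Type*} [PartialOrder P] [TopologicalSpace P]
    (halex : ∀ U : Set P, IsOpen U ↔ IsUpperSet U) (x y : P) :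
    specLE x y ↔ x ≤ y := by
  unfold specLE
  rw [alex_closure halex]
  simp

/-- For a poset `P` with the Alexandroff topology (open sets = upper sets), `P` is an
ω-d-space iff every countable directed subset of `P` has a largest element
(`P` is ω-Noetherian). -/
theorem alexandroff_omegaDSpace_iff_omegaNoetherian {P : Type*} [PartialOrder P]
    [TopologicalSpace P] (halex : ∀ U : Set P, IsOpen U ↔ IsUpperSet U) :
    OmegaDSpace P ↔
    ∀ D : Set P, D.Countable → D.Nonempty → DirectedOn (· ≤ ·) D →
      ∃ m ∈ D, ∀ d ∈ D, d ≤ m := by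
  constructor
  · intro h D hc hne hdir
    obtain ⟨x, hx⟩ := h D hc hne (fun a ha b hb => by
      obtain ⟨c, hc', h1, h2⟩ := hdir a ha b hb
      exact ⟨c, hc', (alex_specLE halex a c).2 h1, (alex_specLE halex b c).2 h2⟩)
    rw [alex_closure halex, alex_closure halex] at hx
    have hxD : x ∈ {y | ∃ s ∈ D, y ≤ s} := by rw [hx]; exact ⟨x, rfl, le_rfl⟩
    obtain ⟨s, hs, hxs⟩ := hxD
    have hsx : s ≤ x := by
      have : s ∈ {y : P | ∃ t ∈ ({x} : Set P), y ≤ t} := by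
        rw [← hx]; exact ⟨s, hs, le_rfl⟩
      obtain ⟨t, ht, hst⟩ := this
      rwa [Set.mem_singleton_iff.1 ht] at hst
    have hxe : x = s := le_antisymm hxs hsx
    refine ⟨x, hxe ▸ hs, fun d hd => ?_⟩
    have : d ∈ {y : P | ∃ t ∈ ({x} : Set P), y ≤ t} := by
      rw [← hx]; exact ⟨d, hd, le_rfl⟩
    obtain ⟨t, ht, hdt⟩ := this
    rwa [Set.mem_singleton_iff.1 ht] at hdt
  · intro h D hc hne hdir
    obtain ⟨m, hm, hmax⟩ := h D hc hne (fun a ha b hb => by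
      obtain ⟨c, hc', h1, h2⟩ := hdir a ha b hb
      exact ⟨c, hc', (alex_specLE halex a c).1 h1, (alex_specLE halex b c).1 h2⟩)
    refine ⟨m, ?_⟩
    rw [alex_closure halex, alex_closure halex]
    ext y
    constructor
    · rintro ⟨s, hs, hle⟩; exact ⟨m, rfl, hle.trans (hmax s hs)⟩
    · rintro ⟨t, ht, hle⟩; exact ⟨m, hm, (Set.mem_singleton_iff.1 ht ▸ hle)⟩
end

section
/- Every ω-well-filtered T0 space is an ω-d-space. -/
lemma specLE_refl' {X : Type*} [TopologicalSpace X] (x : X) : specLE x x :=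
  subset_closure rfl

lemma specLE_trans' {X : Type*} [TopologicalSpace X] {a b c : X}
    (h1 : specLE a b) (h2 : specLE b c) : specLE a c :=
  closure_minimal (Set.singleton_subset_iff.2 h2) isClosed_closure h1

lemma mem_of_specLE' {X : Type*} [TopologicalSpace X] {x y : X} {U : Set X}
    (hU : IsOpen U) (hx : x ∈ U) (h : specLE x y) : y ∈ U := by
  rcases mem_closure_iff.1 h U hU hx with ⟨z, hzU, hzy⟩
  rcases hzy with rfl
  exact hzU

lemma isCompact_upClo' {X : Type*} [TopologicalSpace X] (p : X) : IsCompact (upClo p) := by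
  apply isCompact_of_finite_subcover
  intro ι U hU hcov
  obtain ⟨i, hi⟩ := Set.mem_iUnion.1 (hcov (specLE_refl' p))
  exact ⟨{i}, fun y hy => Set.mem_iUnion₂.2 ⟨i, Finset.mem_singleton_self i,
    mem_of_specLE' (hU i) hi hy⟩⟩

/-- Every ω-well-filtered T0 space is an ω-d-space. -/
theorem omegaDSpace_of_omegaWellFiltered {X : Type*} [TopologicalSpace X] [T0Space X]
    (h : OmegaWellFiltered X) : OmegaDSpace X := by
  intro D hcount hne hdir
  obtain ⟨f, hf⟩ := hcount.exists_eq_range hne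
  subst hf
  have hfD : ∀ n, f n ∈ Set.range f := fun n => ⟨n, rfl⟩
  choose g hgD hg1 hg2 using hdir
  let x : ℕ → {a : X // a ∈ Set.range f} :=
    fun n => Nat.rec ⟨f 0, hfD 0⟩
      (fun n p => ⟨g p.1 p.2 (f (n+1)) (hfD (n+1)), hgD _ _ _ _⟩) n
  have hstep : ∀ n, specLE ((x n).1) ((x (n+1)).1) := fun n => hg1 _ _ _ _
  have hxf : ∀ n, specLE (f n) ((x n).1) := by
    intro n
    cases n with
    | zero => exact specLE_refl' _
    | succ n => exact hg2 _ _ _ _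
  have hmono : ∀ m n, m ≤ n → specLE ((x m).1) ((x n).1) := by
    intro m n hmn
    induction n with
    | zero => rcases Nat.le_zero.1 hmn with rfl; exact specLE_refl' _
    | succ n ih =>
      rcases Nat.lt_succ_iff_lt_or_eq.1 (Nat.lt_succ_of_le hmn) with h' | rfl
      · exact specLE_trans' (ih (Nat.lt_succ_iff.1 h')) (hstep n)
      · exact specLE_refl' _
  set K : ℕ → Set X := fun n => upClo ((x n).1) with hK
  have hKprops : ∀ n, (K n).Nonempty ∧ IsCompact (K n) ∧ IsSaturatedSet (K n) := by
    intro n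
    refine ⟨⟨(x n).1, specLE_refl' _⟩, isCompact_upClo' _, ?_⟩
    intro a b ha hab
    exact specLE_trans' ha hab
  have hKfilt : ∀ m n, ∃ k, K k ⊆ K m ∩ K n := by
    intro m n
    refine ⟨max m n, fun a ha => ⟨?_, ?_⟩⟩
    · exact specLE_trans' (hmono m (max m n) (le_max_left m n)) ha
    · exact specLE_trans' (hmono n (max m n) (le_max_right m n)) ha
  have hnot : ¬ (⋂ n, K n) ⊆ (closure (Set.range f))ᶜ := by
    intro hsub
    obtain ⟨n, hn⟩ := h K hKprops hKfilt _ (isClosed_closure.isOpen_compl) hsub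
    exact hn (specLE_refl' ((x n).1)) (subset_closure (x n).2)
  obtain ⟨a, haK, hacl⟩ : ∃ a, a ∈ (⋂ n, K n) ∧ a ∈ closure (Set.range f) := by
    by_contra hc
    push_neg at hc
    exact hnot fun a ha => hc a ha
  refine ⟨a, le_antisymm ?_ ?_⟩
  · apply closure_minimal _ isClosed_closure
    rintro _ ⟨n, rfl⟩
    exact specLE_trans' (hxf n) (Set.mem_iInter.1 haK n)
  · exact closure_minimal (Set.singleton_subset_iff.2 hacl) isClosed_closure
end

section
/- An ω-well-filtered T0 space X is locally compact if and only if it is core compact. -/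
/-!
Locally compact spaces are core compact because a compact neighbourhood `K ⊆ U` of `x` gives
`interior K ≪ U`. Conversely, given `x ∈ V ≪ U`, interpolation in the continuous lattice of opens
yields opens `U = W₀ ≫ W₁ ≫ W₂ ≫ ⋯ ⊇ V`, and `⋂ Wₙ` is a neighbourhood of `x` inside `U`.
It is compact as soon as every open `O ⊇ ⋂ Wₙ` contains some `Wₙ`. If not, Zorn gives a closed
set `A ⊆ Oᶜ`, minimal among closed sets meeting every `Wₙ`. By minimality every open set meeting
`A` contains a trace `A ∩ Wₖ`, so a sequence `sₙ ∈ A ∩ Wₙ` converges to each of its terms.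
Hence the saturations (`nhdsKer`) of its tails are compact and form a countable filtered family
with intersection inside `⋂ Wₙ ⊆ O`; ω-well-filteredness puts one of them, hence some `sⱼ ∈ A`,
inside `O`.
-/

open Set Filter Topology

def WayBelow {X : Type*} [TopologicalSpace X] (V U : Set X) : Prop :=
  ∀ S : Set (Set X), (∀ W ∈ S, IsOpen W) → U ⊆ ⋃₀ S → ∃ F ⊆ S, F.Finite ∧ V ⊆ ⋃₀ F

local infixl:50 " ≪ " => WayBelow

def CoreCompact (X : Type*) [TopologicalSpace X] : Prop :=
  ∀ U : Set X, IsOpen U → ∀ x ∈ U, ∃ V : Set X, IsOpen V ∧ x ∈ V ∧ V ≪ U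

section

variable {X : Type*} [TopologicalSpace X]

theorem isSaturatedSet_nhdsKer (s : Set X) : IsSaturatedSet (nhdsKer s) := by
  intro x y hx hxy
  obtain ⟨z, hz, hxz⟩ := mem_nhdsKer_iff_specializes.1 hx
  exact mem_nhdsKer_iff_specializes.2 ⟨z, hz, (specializes_iff_mem_closure.2 hxy).trans hxz⟩

namespace WayBelow

variable {U V V₁ V₂ W : Set X}

theorem empty (U : Set X) : (∅ : Set X) ≪ U :=
  fun _ _ _ => ⟨∅, empty_subset _, finite_empty, empty_subset _⟩

theorem subset (hU : IsOpen U) (h : V ≪ U) : V ⊆ U := by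
  obtain ⟨F, hF, -, hVF⟩ := h {U} (by simpa using hU) (by simp)
  exact hVF.trans ((sUnion_mono hF).trans (sUnion_singleton U).subset)

theorem mono_left (hW : W ⊆ V) (h : V ≪ U) : W ≪ U := fun S hS hUS =>
  let ⟨F, hFS, hF, hVF⟩ := h S hS hUS
  ⟨F, hFS, hF, hW.trans hVF⟩

theorem mono_right (h : V ≪ U) (hU : U ⊆ W) : V ≪ W := fun S hS hWS => h S hS (hU.trans hWS)

theorem union (h₁ : V₁ ≪ U) (h₂ : V₂ ≪ U) : V₁ ∪ V₂ ≪ U := by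
  intro S hS hUS
  obtain ⟨F₁, hF₁S, hF₁, hVF₁⟩ := h₁ S hS hUS
  obtain ⟨F₂, hF₂S, hF₂, hVF₂⟩ := h₂ S hS hUS
  refine ⟨F₁ ∪ F₂, union_subset hF₁S hF₂S, hF₁.union hF₂, ?_⟩
  rw [sUnion_union]
  exact union_subset_union hVF₁ hVF₂

theorem exists_subset_of_directed {ι : Type*} [Nonempty ι] {f : ι → Set X} (h : V ≪ U)
    (hf : ∀ i, IsOpen (f i)) (hd : Directed (· ⊆ ·) f) (hUf : U ⊆ ⋃ i, f i) :
    ∃ i, V ⊆ f i := by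
  obtain ⟨F, hFf, hF, hVF⟩ := h (range f) (forall_mem_range.2 hf) (sUnion_range f ▸ hUf)
  obtain ⟨t, -, ht, hVt⟩ := exists_subset_image_finite_and (p := fun F => V ⊆ ⋃₀ F) |>.1
    ⟨F, image_univ ▸ hFf, hF, hVF⟩
  obtain ⟨i, hi⟩ := hd.finite_set_le ht
  exact ⟨i, hVt.trans (sUnion_subset (forall_mem_image.2 hi))⟩

end WayBelow

theorem IsCompact.wayBelow {K U : Set X} (hK : IsCompact K) (hKU : K ⊆ U) : K ≪ U := by
  intro S hS hUS
  obtain ⟨F, hFS, hF, hKF⟩ :=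
    hK.elim_finite_subcover_image (c := id) hS (sUnion_eq_biUnion ▸ hKU.trans hUS)
  exact ⟨F, hFS, hF, sUnion_eq_biUnion ▸ hKF⟩

theorem coreCompact_of_locallyCompactSpace [LocallyCompactSpace X] : CoreCompact X := by
  intro U hU x hx
  obtain ⟨K, hKx, hKU, hK⟩ := local_compact_nhds (hU.mem_nhds hx)
  exact ⟨interior K, isOpen_interior, mem_interior_iff_mem_nhds.2 hKx,
    (hK.wayBelow hKU).mono_left interior_subset⟩

namespace CoreCompact

variable {U V : Set X}

theorem exists_wayBelow_wayBelow (hX : CoreCompact X) (hU : IsOpen U) (hVU : V ≪ U) :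
    ∃ W, IsOpen W ∧ V ≪ W ∧ W ≪ U := by
  let ι := {p : Set X × Set X // IsOpen p.1 ∧ IsOpen p.2 ∧ p.1 ≪ p.2 ∧ p.2 ≪ U}
  have : Nonempty ι :=
    ⟨⟨(∅, ∅), isOpen_empty, isOpen_empty, WayBelow.empty _, WayBelow.empty _⟩⟩
  have hdir : Directed (· ⊆ ·) fun p : ι => p.1.1 := fun ⟨(V₁, W₁), hV₁, hW₁, hVW₁, hWU₁⟩
      ⟨(V₂, W₂), hV₂, hW₂, hVW₂, hWU₂⟩ =>
    ⟨⟨(V₁ ∪ V₂, W₁ ∪ W₂), hV₁.union hV₂, hW₁.union hW₂,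
      (hVW₁.mono_right subset_union_left).union (hVW₂.mono_right subset_union_right),
      hWU₁.union hWU₂⟩, subset_union_left, subset_union_right⟩
  have hcover : U ⊆ ⋃ p : ι, p.1.1 := by
    intro x hx
    obtain ⟨W, hW, hxW, hWU⟩ := hX U hU x hx
    obtain ⟨V', hV', hxV', hV'W⟩ := hX W hW x hxW
    exact mem_iUnion.2 ⟨⟨(V', W), hV', hW, hV'W, hWU⟩, hxV'⟩
  obtain ⟨⟨⟨V', W⟩, _, hW, hV'W, hWU⟩, hVV'⟩ :=
    hVU.exists_subset_of_directed (fun p : ι => p.2.1) hdir hcover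
  exact ⟨W, hW, hV'W.mono_left hVV', hWU⟩

theorem exists_seq_wayBelow (hX : CoreCompact X) (hU : IsOpen U) (hVU : V ≪ U) :
    ∃ W : ℕ → Set X, W 0 = U ∧ (∀ n, IsOpen (W n)) ∧ (∀ n, W (n + 1) ≪ W n) ∧
      ∀ n, V ≪ W n := by
  have step : ∀ W : Set X, IsOpen W ∧ V ≪ W → ∃ W', (IsOpen W' ∧ V ≪ W') ∧ W' ≪ W :=
    fun _ ⟨hW, hVW⟩ =>
      let ⟨W', hW', hVW', hW'W⟩ := hX.exists_wayBelow_wayBelow hW hVW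
      ⟨W', ⟨hW', hVW'⟩, hW'W⟩
  choose! next hnext hnext_wayBelow using step
  have hinv : ∀ n, IsOpen (next^[n] U) ∧ V ≪ next^[n] U := by
    intro n
    induction n with
    | zero => exact ⟨hU, hVU⟩
    | succ n ih => rw [Function.iterate_succ_apply']; exact hnext _ ih
  refine ⟨fun n => next^[n] U, rfl, fun n => (hinv n).1, fun n => ?_, fun n => (hinv n).2⟩
  show next^[n + 1] U ≪ next^[n] U
  rw [Function.iterate_succ_apply']
  exact hnext_wayBelow _ (hinv n)

end CoreCompact

section MinimalClosed

variable {W : ℕ → Set X}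

theorem exists_minimal_isClosed_inter_nonempty (hW : ∀ n, W (n + 1) ≪ W n) {C : Set X}
    (hC : IsClosed C) (hCW : ∀ n, (C ∩ W n).Nonempty) :
    ∃ A ⊆ C, Minimal (fun B => IsClosed B ∧ ∀ n, (B ∩ W n).Nonempty) A := by
  refine zorn_superset_nonempty _ (fun c hc hchain ⟨B₀, hB₀⟩ => ?_) C ⟨hC, hCW⟩
  refine ⟨⋂₀ c, ⟨isClosed_sInter fun B hB => (hc hB).1, fun n => ?_⟩,
    fun B hB => sInter_subset_of_mem hB⟩
  by_contra hempty
  have : Nonempty c := ⟨⟨B₀, hB₀⟩⟩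
  have hcover : W n ⊆ ⋃ B : c, (B : Set X)ᶜ := by
    rw [← compl_iInter, ← sInter_eq_iInter]
    exact fun y hy hyc => hempty ⟨y, hyc, hy⟩
  have hdir : Directed (· ⊆ ·) fun B : c => (B : Set X)ᶜ := fun B₁ B₂ =>
    (hchain.total B₁.2 B₂.2).elim (fun h => ⟨B₁, subset_rfl, compl_subset_compl.2 h⟩)
      fun h => ⟨B₂, compl_subset_compl.2 h, subset_rfl⟩
  obtain ⟨B, hB⟩ :=
    (hW n).exists_subset_of_directed (fun B => (hc B.2).1.isOpen_compl) hdir hcover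
  obtain ⟨y, hyB, hyW⟩ := (hc B.2).2 (n + 1)
  exact hB hyW hyB

variable {A : Set X}

theorem Minimal.exists_inter_subset_of_isOpen
    (hA : Minimal (fun B => IsClosed B ∧ ∀ n, (B ∩ W n).Nonempty) A) {G : Set X} (hG : IsOpen G)
    (hGA : (G ∩ A).Nonempty) : ∃ k, A ∩ W k ⊆ G := by
  by_contra! hAG
  have hA_diff : A ⊆ A \ G := hA.2 ⟨hA.1.1.sdiff hG, fun n => by
    obtain ⟨x, ⟨hxA, hxW⟩, hxG⟩ := not_subset.1 (hAG n)
    exact ⟨x, ⟨hxA, hxG⟩, hxW⟩⟩ sdiff_subset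
  obtain ⟨x, hxG, hxA⟩ := hGA
  exact (hA_diff hxA).2 hxG

theorem Minimal.tendsto_of_forall_mem_inter
    (hA : Minimal (fun B => IsClosed B ∧ ∀ n, (B ∩ W n).Nonempty) A) (hW : Antitone W) {s : ℕ → X}
    (hs : ∀ n, s n ∈ A ∩ W n) {a : X} (ha : a ∈ A) : Tendsto s atTop (𝓝 a) := by
  refine (nhds_basis_opens a).tendsto_right_iff.2 fun G ⟨haG, hG⟩ => ?_
  obtain ⟨k, hk⟩ := hA.exists_inter_subset_of_isOpen hG ⟨a, haG, ha⟩
  exact eventually_atTop.2 ⟨k, fun m hm => hk ⟨(hs m).1, hW hm (hs m).2⟩⟩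

end MinimalClosed

namespace OmegaWellFiltered

variable {W : ℕ → Set X}

theorem exists_subset_of_iInter_subset (hX : OmegaWellFiltered X) (hWo : ∀ n, IsOpen (W n))
    (hW : ∀ n, W (n + 1) ≪ W n) {O : Set X} (hO : IsOpen O) (hWO : ⋂ n, W n ⊆ O) :
    ∃ n, W n ⊆ O := by
  by_contra! hW_not
  have hanti : Antitone W := antitone_nat_of_succ_le fun n => (hW n).subset (hWo n)
  obtain ⟨A, hAO, hA⟩ := exists_minimal_isClosed_inter_nonempty hW hO.isClosed_compl fun n => by
    obtain ⟨x, hxW, hxO⟩ := not_subset.1 (hW_not n)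
    exact ⟨x, hxO, hxW⟩
  choose s hs using hA.1.2
  let tail (j : ℕ) : Set X := range fun m => s (m + j)
  have hs_tail (j : ℕ) : s j ∈ tail j := ⟨0, congrArg s (zero_add j)⟩
  let K (j : ℕ) : Set X := nhdsKer (tail j)
  have hK_compact (j : ℕ) : IsCompact (K j) := by
    have hlim : Tendsto (fun m => s (m + j)) atTop (𝓝 (s j)) :=
      (hA.tendsto_of_forall_mem_inter hanti hs (hs j).1).comp (tendsto_add_atTop_nat j)
    have htail := hlim.isCompact_insert_range
    rw [insert_eq_of_mem (hs_tail j)] at htail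
    exact htail.nhdsKer
  have hK_anti : Antitone K := fun i j hij =>
    nhdsKer_mono (range_subset_iff.2 fun m => ⟨m + (j - i), congrArg s (by omega)⟩)
  have hKW (j : ℕ) : K j ⊆ W j :=
    nhdsKer_minimal (range_subset_iff.2 fun m => hanti le_add_self (hs (m + j)).2) (hWo j)
  obtain ⟨j, hj⟩ := hX K
    (fun j => ⟨⟨s j, subset_nhdsKer (hs_tail j)⟩, hK_compact j, isSaturatedSet_nhdsKer _⟩)
    (fun i j => ⟨max i j, subset_inter (hK_anti (le_max_left i j)) (hK_anti (le_max_right i j))⟩)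
    O hO ((iInter_mono hKW).trans hWO)
  exact hAO (hs j).1 (hj (subset_nhdsKer (hs_tail j)))

theorem isCompact_iInter (hX : OmegaWellFiltered X) (hWo : ∀ n, IsOpen (W n))
    (hW : ∀ n, W (n + 1) ≪ W n) : IsCompact (⋂ n, W n) := by
  refine isCompact_of_finite_subcover fun U hUo hcover => ?_
  obtain ⟨n, hn⟩ := hX.exists_subset_of_iInter_subset hWo hW (isOpen_iUnion hUo) hcover
  obtain ⟨t, ht⟩ := (hW n).exists_subset_of_directed (f := fun t : Finset _ => ⋃ i ∈ t, U i)
    (fun t => isOpen_biUnion fun i _ => hUo i)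
    (directed_of_isDirected_le fun _ _ h => biUnion_subset_biUnion_left h)
    (hn.trans (iUnion_eq_iUnion_finset U).subset)
  exact ⟨t, (iInter_subset W (n + 1)).trans ht⟩

theorem locallyCompactSpace_of_coreCompact (hX : OmegaWellFiltered X) (hcc : CoreCompact X) :
    LocallyCompactSpace X := by
  refine ⟨fun x N hN => ?_⟩
  obtain ⟨U, hUN, hU, hxU⟩ := mem_nhds_iff.1 hN
  obtain ⟨V, hV, hxV, hVU⟩ := hcc U hU x hxU
  obtain ⟨W, rfl, hWo, hW, hVW⟩ := hcc.exists_seq_wayBelow hU hVU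
  have hV_sub : V ⊆ ⋂ n, W n := subset_iInter fun n => (hVW n).subset (hWo n)
  exact ⟨⋂ n, W n, mem_of_superset (hV.mem_nhds hxV) hV_sub, (iInter_subset W 0).trans hUN,
    hX.isCompact_iInter hWo hW⟩

end OmegaWellFiltered

end

theorem omegaWellFiltered_locallyCompact_iff_coreCompact_general {X : Type*} [TopologicalSpace X]
    (h : OmegaWellFiltered X) :
    LocallyCompactSpace X ↔
    (∀ U : Set X, IsOpen U → ∀ x ∈ U, ∃ V : Set X, IsOpen V ∧ x ∈ V ∧
      ∀ S : Set (Set X), (∀ W ∈ S, IsOpen W) → U ⊆ ⋃₀ S →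
        ∃ F ⊆ S, F.Finite ∧ V ⊆ ⋃₀ F) :=
  ⟨fun _ => coreCompact_of_locallyCompactSpace, h.locallyCompactSpace_of_coreCompact⟩

/-- An ω-well-filtered T0 space is locally compact iff it is core compact (every point of
an open set `U` has an open neighbourhood `V` with `V ≪ U`). -/
theorem omegaWellFiltered_locallyCompact_iff_coreCompact {X : Type*} [TopologicalSpace X]
    [T0Space X] (h : OmegaWellFiltered X) :
    LocallyCompactSpace X ↔
    (∀ U : Set X, IsOpen U → ∀ x ∈ U, ∃ V : Set X, IsOpen V ∧ x ∈ V ∧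
      ∀ S : Set (Set X), (∀ W ∈ S, IsOpen W) → U ⊆ ⋃₀ S →
        ∃ F ⊆ S, F.Finite ∧ V ⊆ ⋃₀ F) :=
  omegaWellFiltered_locallyCompact_iff_coreCompact_general h
end

section
/- Let X be a first countable ω-well-filtered T0 space and A an irreducible subset of X. Then the closure of A is directed in the specialization order. -/
/-- `X` is well-filtered: for every filtered family `𝒦` of nonempty compact saturated sets
and every open `U`, `⋂𝒦 ⊆ U` implies `K ⊆ U` for some `K ∈ 𝒦`. -/
def WellFiltered (X : Type*) [TopologicalSpace X] : Prop :=
  ∀ 𝒦 : Set (Set X), 𝒦.Nonempty →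
    (∀ K ∈ 𝒦, K.Nonempty ∧ IsCompact K ∧ IsSaturatedSet K) →
    (∀ K₁ ∈ 𝒦, ∀ K₂ ∈ 𝒦, ∃ K₃ ∈ 𝒦, K₃ ⊆ K₁ ∩ K₂) →
    ∀ U : Set X, IsOpen U → ⋂₀ 𝒦 ⊆ U → ∃ K ∈ 𝒦, K ⊆ U

/-- `X` is a d-space: the closure of every directed subset (in the specialization order)
has a generic point. -/
def DSpace (X : Type*) [TopologicalSpace X] : Prop :=
  ∀ D : Set X, D.Nonempty → DirectedOn specLE D → ∃ x, closure D = closure ({x} : Set X)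

/-- In a first countable ω-well-filtered T0 space, the closure of every irreducible set is
directed in the specialization order. -/
theorem closure_irreducible_directed {X : Type*} [TopologicalSpace X] [T0Space X]
    [FirstCountableTopology X] (h : OmegaWellFiltered X)
    (A : Set X) (hA : IsIrreducible A) :
    DirectedOn specLE (closure A) := by
  classical
  obtain ⟨a0, ha0⟩ := hA.1
  intro a ha b hb
  -- open antitone neighborhood bases at every point
  have hB : ∀ p : X, ∃ B : ℕ → Set X, (∀ n, IsOpen (B n)) ∧ (∀ n, p ∈ B n) ∧ Antitone B ∧
      (∀ W : Set X, IsOpen W → p ∈ W → ∃ n, B n ⊆ W) := by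
    intro p
    obtain ⟨u, hu⟩ := (nhds p).exists_antitone_basis
    refine ⟨fun n => interior (u n), fun n => isOpen_interior, fun n => ?_, ?_, ?_⟩
    · exact mem_interior_iff_mem_nhds.mpr (hu.toHasBasis.mem_of_mem trivial)
    · exact fun m n hmn => interior_mono (hu.antitone hmn)
    · intro W hWo hpW
      obtain ⟨n, -, hn⟩ := hu.toHasBasis.mem_iff.mp (hWo.mem_nhds hpW)
      exact ⟨n, interior_subset.trans hn⟩
  choose B hBo hBm hBanti hBbasis using hB
  -- finite intersections of opens meeting A meet A
  have hfin : ∀ (s : Finset ℕ) (f : ℕ → Set X), (∀ i ∈ s, IsOpen (f i)) →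
      (∀ i ∈ s, (A ∩ f i).Nonempty) → (A ∩ ⋂ i ∈ s, f i).Nonempty := by
    intro s
    induction s using Finset.induction_on with
    | empty => intro f _ _; simpa using hA.1
    | @insert i s hi ih =>
      intro f hfo hfne
      have h2 := ih f (fun j hj => hfo j (Finset.mem_insert_of_mem hj))
        (fun j hj => hfne j (Finset.mem_insert_of_mem hj))
      have h3 := hA.2 (f i) (⋂ j ∈ s, f j) (hfo i (Finset.mem_insert_self i s))
        (isOpen_biInter_finset fun j hj => hfo j (Finset.mem_insert_of_mem hj))
        (hfne i (Finset.mem_insert_self i s)) h2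
      simpa [Finset.set_biInter_insert] using h3
  -- the recursive sequence
  let pickSet : ℕ → (ℕ → X) → Set X := fun n prev =>
    A ∩ (B a n ∩ (B b n ∩ ⋂ m ∈ Finset.range n, B (prev m) n))
  let pick : ℕ → (ℕ → X) → X := fun n prev =>
    if hne : (pickSet n prev).Nonempty then hne.some else a0
  let pre : ℕ → ℕ → X := fun n =>
    Nat.rec (fun _ => a0) (fun k ih => Function.update ih k (pick k ih)) n
  have hpre : ∀ k, pre (k + 1) = Function.update (pre k) k (pick k (pre k)) := fun k => rfl
  let x : ℕ → X := fun n => pre (n + 1) n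
  have hcoh : ∀ n m, m < n → pre n m = x m := by
    intro n
    induction n with
    | zero => intro m hm; omega
    | succ k ih =>
      intro m hm
      rcases Nat.lt_succ_iff_lt_or_eq.mp hm with hm' | rfl
      · rw [hpre k, Function.update_of_ne (Nat.ne_of_lt hm')]
        exact ih m hm'
      · rfl
  have hxmem : ∀ n, x n ∈ A ∧ x n ∈ B a n ∧ x n ∈ B b n ∧ ∀ m, m < n → x n ∈ B (x m) n := by
    intro n
    induction n using Nat.strong_induction_on with
    | _ n ih =>
      have hne : (pickSet n (pre n)).Nonempty := by
        have h1 : ∀ m ∈ Finset.range n, (A ∩ B (pre n m) n).Nonempty := by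
          intro m hm
          rw [Finset.mem_range] at hm
          rw [hcoh n m hm]
          exact ⟨x m, (ih m hm).1, hBm (x m) n⟩
        have h2 := hfin (Finset.range n) (fun m => B (pre n m) n) (fun m _ => hBo _ n) h1
        have hao : (A ∩ B a n).Nonempty := by
          obtain ⟨z, hz1, hz2⟩ := mem_closure_iff.mp ha (B a n) (hBo a n) (hBm a n)
          exact ⟨z, hz2, hz1⟩
        have hbo : (A ∩ B b n).Nonempty := by
          obtain ⟨z, hz1, hz2⟩ := mem_closure_iff.mp hb (B b n) (hBo b n) (hBm b n)
          exact ⟨z, hz2, hz1⟩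
        have h3 := hA.2 (B b n) (⋂ m ∈ Finset.range n, B (pre n m) n) (hBo b n)
          (isOpen_biInter_finset fun m _ => hBo _ n) hbo h2
        exact hA.2 (B a n) _ (hBo a n)
          ((hBo b n).inter (isOpen_biInter_finset fun m _ => hBo _ n)) hao h3
      have hxn : x n = hne.some := by
        show pre (n + 1) n = _
        rw [hpre n, Function.update_self]
        exact dif_pos hne
      have hmem : x n ∈ pickSet n (pre n) := by rw [hxn]; exact hne.some_mem
      obtain ⟨h1, h2, h3, h4⟩ := hmem
      refine ⟨h1, h2, h3, fun m hm => ?_⟩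
      simp only [Set.mem_iInter] at h4
      have h5 := h4 m (Finset.mem_range.mpr hm)
      rwa [hcoh n m hm] at h5
  -- convergence to a, b and to each x m
  have hconva : ∀ W : Set X, IsOpen W → a ∈ W → ∃ N, ∀ n, N ≤ n → x n ∈ W := by
    intro W hWo haW
    obtain ⟨k, hk⟩ := hBbasis a W hWo haW
    exact ⟨k, fun n hn => hk (hBanti a hn (hxmem n).2.1)⟩
  have hconvb : ∀ W : Set X, IsOpen W → b ∈ W → ∃ N, ∀ n, N ≤ n → x n ∈ W := by
    intro W hWo hbW
    obtain ⟨k, hk⟩ := hBbasis b W hWo hbW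
    exact ⟨k, fun n hn => hk (hBanti b hn (hxmem n).2.2.1)⟩
  have hconvx : ∀ m (W : Set X), IsOpen W → x m ∈ W → ∃ N, ∀ n, N ≤ n → x n ∈ W := by
    intro m W hWo hxW
    obtain ⟨k, hk⟩ := hBbasis (x m) W hWo hxW
    refine ⟨max k (m + 1), fun n hn => ?_⟩
    have h1 : m < n := lt_of_lt_of_le (Nat.lt_succ_self m) (le_trans (le_max_right k (m + 1)) hn)
    exact hk (hBanti (x m) (le_trans (le_max_left k (m + 1)) hn) ((hxmem n).2.2.2 m h1))
  -- the compact saturated sets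
  let K : ℕ → Set X := fun n => {y | ∃ m, n ≤ m ∧ x m ∈ closure ({y} : Set X)}
  have hKprop : ∀ n, (K n).Nonempty ∧ IsCompact (K n) ∧ IsSaturatedSet (K n) := by
    intro n
    refine ⟨⟨x n, n, le_refl n, subset_closure rfl⟩, ?_, ?_⟩
    · apply isCompact_of_finite_subcover
      intro ι U hUo hcover
      have hxn : x n ∈ K n := ⟨n, le_refl n, subset_closure rfl⟩
      obtain ⟨i0, hi0⟩ : ∃ i, x n ∈ U i := by simpa using hcover hxn
      obtain ⟨N, hN⟩ := hconvx n (U i0) (hUo i0) hi0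
      have hch : ∀ m, ∃ i, (n ≤ m → x m ∈ U i) := by
        intro m
        by_cases hm : n ≤ m
        · obtain ⟨i, hi⟩ : ∃ i, x m ∈ U i := by
            simpa using hcover ⟨m, hm, subset_closure rfl⟩
          exact ⟨i, fun _ => hi⟩
        · exact ⟨i0, fun hmm => absurd hmm hm⟩
      choose ind hind using hch
      refine ⟨insert i0 ((Finset.range N).image ind), ?_⟩
      rintro y ⟨m, hm, hy⟩
      have hkey : ∀ i, x m ∈ U i → y ∈ U i := by
        intro i hxi
        obtain ⟨z, hz1, hz2⟩ := mem_closure_iff.mp hy (U i) (hUo i) hxi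
        rw [Set.mem_singleton_iff] at hz2
        rwa [hz2] at hz1
      by_cases hmN : m < N
      · exact Set.mem_biUnion
          (Finset.mem_insert_of_mem (Finset.mem_image_of_mem ind (Finset.mem_range.mpr hmN)))
          (hkey _ (hind m hm))
      · exact Set.mem_biUnion (Finset.mem_insert_self i0 _)
          (hkey i0 (hN m (le_of_not_gt hmN)))
    · rintro y z ⟨m, hm, hy⟩ hyz
      have hsub : closure ({y} : Set X) ⊆ closure ({z} : Set X) :=
        closure_minimal (Set.singleton_subset_iff.mpr hyz) isClosed_closure
      exact ⟨m, hm, hsub hy⟩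
  have hKfilt : ∀ m n, ∃ k, K k ⊆ K m ∩ K n := by
    intro m n
    refine ⟨max m n, fun y hy => ?_⟩
    obtain ⟨j, hj, hyj⟩ := hy
    exact ⟨⟨j, le_trans (le_max_left m n) hj, hyj⟩, ⟨j, le_trans (le_max_right m n) hj, hyj⟩⟩
  -- apply ω-well-filteredness
  have hns : ¬ (⋂ n, K n) ⊆ (closure A)ᶜ := by
    intro hsub
    obtain ⟨n, hn⟩ := h K hKprop hKfilt ((closure A)ᶜ) isClosed_closure.isOpen_compl hsub
    exact hn ⟨n, le_refl n, subset_closure rfl⟩ (subset_closure (hxmem n).1)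
  obtain ⟨y, hy1, hy2⟩ := Set.not_subset.mp hns
  have hyA : y ∈ closure A := not_not.mp hy2
  refine ⟨y, hyA, ?_, ?_⟩
  · by_contra hc
    obtain ⟨N, hN⟩ := hconva (closure ({y} : Set X))ᶜ isClosed_closure.isOpen_compl hc
    obtain ⟨m, hm, hsm⟩ := Set.mem_iInter.mp hy1 N
    exact hN m hm hsm
  · by_contra hc
    obtain ⟨N, hN⟩ := hconvb (closure ({y} : Set X))ᶜ isClosed_closure.isOpen_compl hc
    obtain ⟨m, hm, hsm⟩ := Set.mem_iInter.mp hy1 N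
    exact hN m hm hsm
end

section
/- Let L = {⊥} ∪ (ℕ × ℕ) ∪ {⊤} ordered by: ⊥ ≤ (n,m) ≤ ⊤ for all n,m, and (n1,m1) ≤ (n2,m2) iff n1 = n2 and m1 ≤ m2. Then L is a countable complete lattice whose Scott space (L, σ(L)) is not first countable: there is no countable neighborhood base at ⊤ in the Scott topology. -/
/-- A set `U` in a poset is Scott open if it is an upper set and meets every (nonempty)
directed set whose supremum lies in `U`. -/
def ScottOpenSet {L : Type*} [PartialOrder L] (U : Set L) : Prop :=
  IsUpperSet U ∧ ∀ D : Set L, D.Nonempty → DirectedOn (· ≤ ·) D →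
    ∀ s : L, IsLUB D s → s ∈ U → (D ∩ U).Nonempty

/-- Let `L = {⊥} ∪ (ℕ × ℕ) ∪ {⊤}` with `⊥ ≤ (n,m) ≤ ⊤` and
`(n₁,m₁) ≤ (n₂,m₂)` iff `n₁ = n₂ ∧ m₁ ≤ m₂`.  Then `L` is a countable complete lattice
whose Scott topology has no countable neighborhood base at `⊤`. -/
theorem scott_not_firstCountable_at_top {L : Type*} [PartialOrder L]
    (bot top : L) (e : ℕ × ℕ → L)
    (hinj : Function.Injective e)
    (hbot : ∀ x : L, bot ≤ x) (htop : ∀ x : L, x ≤ top)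
    (hbt : bot ≠ top) (hbe : ∀ p, bot ≠ e p) (hte : ∀ p, top ≠ e p)
    (hcover : ∀ x : L, x = bot ∨ x = top ∨ ∃ p, x = e p)
    (horder : ∀ p q : ℕ × ℕ, e p ≤ e q ↔ p.1 = q.1 ∧ p.2 ≤ q.2) :
    Countable L ∧ (∀ S : Set L, ∃ s, IsLUB S s) ∧
    ¬ ∃ B : ℕ → Set L, (∀ n, ScottOpenSet (B n) ∧ top ∈ B n) ∧
        ∀ U : Set L, ScottOpenSet U → top ∈ U → ∃ n, B n ⊆ U := by
  have hebot : ∀ p, ¬ e p ≤ bot := fun p h => hbe p (le_antisymm (hbot _) h)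
  have htople : ∀ p, ¬ top ≤ e p := fun p h => hte p (le_antisymm h (htop _))
  have htopbot : ¬ top ≤ bot := fun h => hbt (le_antisymm (hbot _) h)
  refine ⟨?_, ?_, ?_⟩
  · -- countable
    have hsurj : Function.Surjective (fun o : Option (Option (ℕ × ℕ)) =>
        Option.elim o bot (fun o' => Option.elim o' top e)) := by
      intro x
      rcases hcover x with h | h | ⟨p, h⟩
      · exact ⟨none, h.symm⟩
      · exact ⟨some none, h.symm⟩
      · exact ⟨some (some p), h.symm⟩
    exact hsurj.countable
  · -- every set has a LUB
    intro S
    by_cases hts : top ∈ S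
    · exact ⟨top, fun x _ => htop x, fun b hb => hb hts⟩
    by_cases heS : ∃ p, e p ∈ S
    · obtain ⟨p0, hp0⟩ := heS
      by_cases hub : ∃ q : ℕ × ℕ, ∀ x ∈ S, x ≤ e q
      · obtain ⟨q, hq⟩ := hub
        set T : Set ℕ := {m | e (q.1, m) ∈ S} with hT
        have hp0T : p0.2 ∈ T := by
          have h1 := (horder p0 q).mp (hq _ hp0)
          show e (q.1, p0.2) ∈ S
          rw [show (q.1, p0.2) = p0 from Prod.ext h1.1.symm rfl]
          exact hp0
        have hbdd : BddAbove T := ⟨q.2, fun m hm => ((horder _ q).mp (hq _ hm)).2⟩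
        have hMmem : sSup T ∈ T := Nat.sSup_mem ⟨p0.2, hp0T⟩ hbdd
        refine ⟨e (q.1, sSup T), fun x hx => ?_, fun b hb => hb hMmem⟩
        rcases hcover x with h | h | ⟨r, h⟩
        · exact le_of_eq h |>.trans (hbot _)
        · exact absurd (h ▸ hx) hts
        · subst h
          have h1 := (horder r q).mp (hq _ hx)
          refine (horder r _).mpr ⟨h1.1, le_csSup hbdd ?_⟩
          show e (q.1, r.2) ∈ S
          rw [show (q.1, r.2) = r from Prod.ext h1.1.symm rfl]
          exact hx
      · refine ⟨top, fun x _ => htop x, fun b hb => ?_⟩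
        rcases hcover b with h | h | ⟨r, h⟩
        · subst h; exact absurd (hb hp0) (hebot p0)
        · exact ge_of_eq h
        · subst h; exact absurd ⟨r, hb⟩ hub
    · refine ⟨bot, fun x hx => ?_, fun b _ => hbot b⟩
      rcases hcover x with h | h | ⟨r, h⟩
      · exact le_of_eq h
      · exact absurd (h ▸ hx) hts
      · exact absurd (h ▸ hx) (fun hh => heS ⟨r, hh⟩)
  · -- no countable base at top
    rintro ⟨B, hB, hbase⟩
    have key : ∀ n : ℕ, ∃ m, e (n, m) ∈ B n := by
      intro n
      set D : Set L := {x | ∃ m, x = e (n, m)} with hD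
      have hDne : D.Nonempty := ⟨e (n, 0), 0, rfl⟩
      have hDdir : DirectedOn (· ≤ ·) D := by
        rintro _ ⟨m1, rfl⟩ _ ⟨m2, rfl⟩
        exact ⟨e (n, max m1 m2), ⟨_, rfl⟩,
          (horder _ _).mpr ⟨rfl, le_max_left _ _⟩,
          (horder _ _).mpr ⟨rfl, le_max_right _ _⟩⟩
      have hlub : IsLUB D top := by
        refine ⟨fun x _ => htop x, fun b hb => ?_⟩
        rcases hcover b with h | h | ⟨r, h⟩
        · subst h; exact absurd (hb ⟨0, rfl⟩) (hebot _)
        · exact ge_of_eq h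
        · subst h
          have h2 := ((horder _ _).mp (hb ⟨r.2 + 1, rfl⟩)).2
          omega
      obtain ⟨x, hxD, hxB⟩ := (hB n).1.2 D hDne hDdir top hlub (hB n).2
      obtain ⟨m, rfl⟩ := hxD
      exact ⟨m, hxB⟩
    choose f hf using key
    set U : Set L := {x | x = top ∨ ∃ q : ℕ × ℕ, x = e q ∧ f q.1 < q.2} with hU
    have hUtop : top ∈ U := Or.inl rfl
    have hUupper : IsUpperSet U := by
      rintro x y hxy (rfl | ⟨q, rfl, hq⟩)
      · exact Or.inl (le_antisymm (htop y) hxy)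
      · rcases hcover y with h | h | ⟨r, h⟩
        · exact absurd (hxy.trans (le_of_eq h)) (hebot q)
        · exact Or.inl h
        · subst h
          obtain ⟨h1, h2⟩ := (horder q r).mp hxy
          exact Or.inr ⟨r, rfl, h1 ▸ lt_of_lt_of_le hq h2⟩
    have hUscott : ScottOpenSet U := by
      refine ⟨hUupper, ?_⟩
      intro D hDne hDdir s hs hsU
      by_contra hcon
      rw [Set.not_nonempty_iff_eq_empty] at hcon
      have hnotin : ∀ x ∈ D, x ∉ U := fun x hx hxU =>
        Set.eq_empty_iff_forall_notMem.mp hcon x ⟨hx, hxU⟩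
      have htopD : top ∉ D := fun h => hnotin _ h hUtop
      have heD : ∃ r, e r ∈ D := by
        by_contra he
        push_neg at he
        have hbub : ∀ x ∈ D, x ≤ bot := by
          intro x hx
          rcases hcover x with h | h | ⟨r, h⟩
          · exact le_of_eq h
          · exact absurd (h ▸ hx) htopD
          · exact absurd (h ▸ hx) (he r)
        have hsb : s ≤ bot := hs.2 hbub
        rcases hsU with rfl | ⟨q, rfl, _⟩
        · exact htopbot hsb
        · exact hebot q hsb
      obtain ⟨r, hrD⟩ := heD
      have hsame : ∀ r', e r' ∈ D → r'.1 = r.1 := by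
        intro r' hr'
        obtain ⟨z, hzD, hz1, hz2⟩ := hDdir _ hr' _ hrD
        rcases hcover z with h | h | ⟨w, h⟩
        · exact absurd (hz1.trans (le_of_eq h)) (hebot r')
        · exact absurd (h ▸ hzD) htopD
        · subst h
          exact ((horder _ _).mp hz1).1.trans ((horder _ _).mp hz2).1.symm
      have hb : ∀ x ∈ D, x ≤ e (r.1, f r.1) := by
        intro x hx
        rcases hcover x with h | h | ⟨r', h⟩
        · exact (le_of_eq h).trans (hbot _)
        · exact absurd (h ▸ hx) htopD
        · subst h
          have h1 := hsame r' hx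
          have h2 : ¬ f r'.1 < r'.2 := fun hlt => hnotin _ hx (Or.inr ⟨r', rfl, hlt⟩)
          rw [h1] at h2
          exact (horder _ _).mpr ⟨h1, by omega⟩
      have hsle : s ≤ e (r.1, f r.1) := hs.2 hb
      rcases hsU with rfl | ⟨q, rfl, hq⟩
      · exact htople _ hsle
      · obtain ⟨h1, h2⟩ := (horder _ _).mp hsle
        rw [h1] at hq
        have h2' : q.2 ≤ f r.1 := h2
        have hq' : f r.1 < q.2 := hq
        omega
    obtain ⟨n, hn⟩ := hbase U hUscott hUtop
    rcases hn (hf n) with h | ⟨q, h, hq⟩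
    · exact hte (n, f n) h.symm
    · obtain rfl := (hinj h).symm
      exact lt_irrefl _ hq
end

section
/- A retract of an ω-well-filtered T0 space is ω-well-filtered. -/
/-!
Push the countable filtered family `Kₙ` of `Y` into `X` as the saturations of `g '' Kₙ`:
these are again nonempty, compact, saturated and filtered, and `f` maps each of them back
into `Kₙ`, because `f` preserves specialization and `Kₙ` is saturated. Hence their
intersection lies in `f ⁻¹' U`, ω-well-filteredness of `X` gives an `n` with the saturation of
`g '' Kₙ` inside `f ⁻¹' U`, and applying `f` yields `Kₙ ⊆ U`.
-/

open Set

section Saturation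

variable {X : Type*} [TopologicalSpace X]

lemma specLE_iff_specializes {x y : X} : specLE x y ↔ y ⤳ x :=
  specializes_iff_mem_closure.symm

lemma IsSaturatedSet.mem_of_specializes {K : Set X} (hK : IsSaturatedSet K) {x y : X}
    (hxy : x ⤳ y) (hy : y ∈ K) : x ∈ K :=
  hK y x hy (specLE_iff_specializes.2 hxy)

/-- The saturation `↑S` of `S`, i.e. the intersection of all open sets containing `S`. -/
def generalizationHull (S : Set X) : Set X := {x | ∃ s ∈ S, x ⤳ s}

lemma subset_generalizationHull (S : Set X) : S ⊆ generalizationHull S :=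
  fun x hx => ⟨x, hx, specializes_refl x⟩

lemma generalizationHull_mono {S T : Set X} (h : S ⊆ T) :
    generalizationHull S ⊆ generalizationHull T :=
  fun _ ⟨s, hs, hxs⟩ => ⟨s, h hs, hxs⟩

lemma generalizationHull_subset_of_isOpen {S U : Set X} (hU : IsOpen U) (h : S ⊆ U) :
    generalizationHull S ⊆ U :=
  fun _ ⟨_, hs, hxs⟩ => hxs.mem_open hU (h hs)

lemma isSaturatedSet_generalizationHull (S : Set X) :
    IsSaturatedSet (generalizationHull S) := by
  rintro x y ⟨s, hs, hxs⟩ hxy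
  exact ⟨s, hs, (specLE_iff_specializes.1 hxy).trans hxs⟩

lemma IsCompact.generalizationHull {S : Set X} (hS : IsCompact S) :
    IsCompact (generalizationHull S) := by
  rw [isCompact_iff_finite_subcover] at hS ⊢
  intro ι V hV hcover
  obtain ⟨t, ht⟩ := hS V hV ((subset_generalizationHull S).trans hcover)
  exact ⟨t, generalizationHull_subset_of_isOpen (isOpen_biUnion fun i _ => hV i) ht⟩

lemma mapsTo_generalizationHull {Y : Type*} [TopologicalSpace Y] {f : X → Y}
    (hf : Continuous f) {S : Set X} {K : Set Y} (hK : IsSaturatedSet K) (h : MapsTo f S K) :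
    MapsTo f (generalizationHull S) K :=
  fun _ ⟨_, hs, hxs⟩ => hK.mem_of_specializes (hxs.map hf) (h hs)

end Saturation

theorem omegaWellFiltered_of_retract_general {X Y : Type*} [TopologicalSpace X] [TopologicalSpace Y]
    (hX : OmegaWellFiltered X)
    (f : X → Y) (g : Y → X) (hf : Continuous f) (hg : Continuous g)
    (hfg : f ∘ g = id) :
    OmegaWellFiltered Y := by
  intro K hK hdir U hU hKU
  have hfg' : ∀ y, f (g y) = y := congrFun hfg
  set L : ℕ → Set X := fun n => generalizationHull (g '' K n)
  have hL : ∀ n, (L n).Nonempty ∧ IsCompact (L n) ∧ IsSaturatedSet (L n) := fun n =>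
    ⟨((hK n).1.image g).mono (subset_generalizationHull _),
      ((hK n).2.1.image hg).generalizationHull, isSaturatedSet_generalizationHull _⟩
  have hLdir : ∀ m n, ∃ k, L k ⊆ L m ∩ L n := fun m n => by
    obtain ⟨k, hk⟩ := hdir m n
    exact ⟨k, subset_inter
      (generalizationHull_mono (image_mono (hk.trans inter_subset_left)))
      (generalizationHull_mono (image_mono (hk.trans inter_subset_right)))⟩
  have hLK : ∀ n, MapsTo f (L n) (K n) := fun n =>
    mapsTo_generalizationHull hf (hK n).2.2 (by rw [mapsTo_image_iff, hfg]; exact mapsTo_id _)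
  have hLU : (⋂ n, L n) ⊆ f ⁻¹' U := fun x hx =>
    hKU (mem_iInter.2 fun n => hLK n (mem_iInter.1 hx n))
  obtain ⟨n, hn⟩ := hX L hL hLdir (f ⁻¹' U) (hU.preimage hf) hLU
  refine ⟨n, fun y hy => ?_⟩
  simpa only [mem_preimage, hfg'] using hn (subset_generalizationHull _ ⟨y, hy, rfl⟩)

/-- A retract of an ω-well-filtered T0 space is ω-well-filtered. -/
theorem omegaWellFiltered_of_retract {X Y : Type*} [TopologicalSpace X] [TopologicalSpace Y]
    [T0Space X] [T0Space Y] (hX : OmegaWellFiltered X)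
    (f : X → Y) (g : Y → X) (hf : Continuous f) (hg : Continuous g)
    (hfg : f ∘ g = id) :
    OmegaWellFiltered Y :=
  omegaWellFiltered_of_retract_general hX f g hf hg hfg
end
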